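/- The function p ↦ D(p) = 2^{p/2} Γ(1-p) / Γ(1-p/2)³ is strictly increasing on (0,1), and D(p) > 1 for all p ∈ (0,1). -/

import Mathlib

open Real

noncomputable def D (p : ℝ) : ℝ :=
  2 ^ (p / 2) * Real.Gamma (1 - p) / Real.Gamma (1 - p / 2) ^ 3

/-!
Write `log D(p) = (p/2) log 2 + log Γ(1-p) - 3 log Γ(1-p/2)` and approximate each `log Γ` by
Euler's limit formula. The `n`-th approximant has derivative
`log 2 / 2 + log n / 2 + ∑_{m ≤ n} (1/(1-p+m) - (3/2)/(1-p/2+m))`; every summand is smallest at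
`p = 0`, where the sum is `-H_{n+1}/2`, so the derivative is at least `(log 2 - γ)/2 - 1/n`.
By the mean value theorem and a limit, `log D` grows at rate at least `(log 2 - γ)/2 > 0` on
`[0, 1)`, and `D 0 = 1`.
-/

open Filter Topology Finset Real.BohrMollerup

lemma Real.eulerMascheroniConstant_lt_log_two : eulerMascheroniConstant < log 2 := by
  have := log_two_gt_d9
  have := eulerMascheroniConstant_lt_two_thirds
  linarith

lemma harmonic_succ_sub_log_le {n : ℕ} (hn : n ≠ 0) :
    (harmonic (n + 1) : ℝ) - log n ≤ eulerMascheroniConstant + 2 / n := by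
  have hseq := eulerMascheroniSeq_lt_eulerMascheroniConstant (n + 1)
  rw [eulerMascheroniSeq] at hseq
  push_cast at hseq
  have hn' : (0 : ℝ) < n := by positivity
  have hlog : log ((n : ℝ) + 1 + 1) - log n ≤ 2 / n := by
    rw [← log_div (by positivity) hn'.ne']
    calc log (((n : ℝ) + 1 + 1) / n) ≤ ((n : ℝ) + 1 + 1) / n - 1 :=
          log_le_sub_one_of_pos (by positivity)
      _ = 2 / n := by field_simp; ring
  linarith

lemma Real.BohrMollerup.hasDerivAt_logGammaSeq (n : ℕ) {x : ℝ} (hx : 0 < x) :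
    HasDerivAt (fun y ↦ logGammaSeq y n) (log n - ∑ m ∈ range (n + 1), (x + m)⁻¹) x := by
  have hlin : HasDerivAt (fun y ↦ y * log n + log n.factorial) (log n) x := by
    simpa using ((hasDerivAt_id x).mul_const (log n)).add_const (log n.factorial)
  have hsum : HasDerivAt (fun y ↦ ∑ m ∈ range (n + 1), log (y + m))
      (∑ m ∈ range (n + 1), (x + m)⁻¹) x :=
    .fun_sum fun m _ ↦ by simpa using ((hasDerivAt_id x).add_const (m : ℝ)).log (by positivity)
  exact hlin.fun_sub hsum

lemma log_D {p : ℝ} (hp : p < 1) :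
    log (D p) = p / 2 * log 2 + log (Gamma (1 - p)) - 3 * log (Gamma (1 - p / 2)) := by
  have h1 := Gamma_pos_of_pos (sub_pos.2 hp)
  have h2 := Gamma_pos_of_pos (show 0 < 1 - p / 2 by linarith)
  rw [D, log_div (by positivity) (by positivity), log_mul (by positivity) h1.ne', log_rpow two_pos,
    log_pow]
  push_cast
  ring

lemma D_pos {p : ℝ} (hp : p < 1) : 0 < D p := by
  have h1 := Gamma_pos_of_pos (sub_pos.2 hp)
  have h2 := Gamma_pos_of_pos (show 0 < 1 - p / 2 by linarith)
  unfold D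
  positivity

noncomputable def logDSeq (n : ℕ) (p : ℝ) : ℝ :=
  p / 2 * log 2 + logGammaSeq (1 - p) n - 3 * logGammaSeq (1 - p / 2) n

lemma tendsto_logDSeq {p : ℝ} (hp : p < 1) :
    Tendsto (logDSeq · p) atTop (𝓝 (log (D p))) := by
  rw [log_D hp]
  exact ((tendsto_log_gamma (sub_pos.2 hp)).const_add _).sub
    ((tendsto_log_gamma (by linarith)).const_mul 3)

lemma hasDerivAt_logDSeq (n : ℕ) {p : ℝ} (hp : p < 1) :
    HasDerivAt (logDSeq n) (log 2 / 2 + log n / 2 +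
      ∑ m ∈ range (n + 1), ((1 - p + m)⁻¹ - 3 / 2 * (1 - p / 2 + m)⁻¹)) p := by
  have h0 : HasDerivAt (fun p : ℝ ↦ p / 2 * log 2) (log 2 / 2) p := by
    simpa [div_mul_eq_mul_div, inv_mul_eq_div] using
      ((hasDerivAt_id p).div_const 2).mul_const (log 2)
  have h1 := (hasDerivAt_logGammaSeq n (sub_pos.2 hp)).scomp p ((hasDerivAt_id p).const_sub 1)
  have h2 := (hasDerivAt_logGammaSeq n (show 0 < 1 - p / 2 by linarith)).scomp p
    (((hasDerivAt_id p).div_const 2).const_sub 1)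
  refine HasDerivAt.congr_deriv (f := logDSeq n) ((h0.add h1).sub (h2.const_mul 3)) ?_
  simp only [sum_sub_distrib, ← mul_sum, smul_eq_mul]
  ring

lemma neg_half_inv_le {a p : ℝ} (hp : 0 ≤ p) (hpa : p < a) :
    -(a⁻¹ / 2) ≤ (a - p)⁻¹ - 3 / 2 * (a - p / 2)⁻¹ := by
  have ha : 0 < a := hp.trans_lt hpa
  have h1 : 0 < a - p := sub_pos.2 hpa
  have h2 : 0 < 2 * a - p := by linarith
  have key : (a - p)⁻¹ - 3 / 2 * (a - p / 2)⁻¹ + a⁻¹ / 2 =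
      p * (a + p) / (2 * a * (a - p) * (2 * a - p)) := by
    have : a - p / 2 ≠ 0 := by linarith
    field_simp [show a * 2 - p ≠ 0 by linarith]
    ring
  have : 0 ≤ p * (a + p) / (2 * a * (a - p) * (2 * a - p)) := by positivity
  linarith

lemma le_deriv_logDSeq {n : ℕ} (hn : n ≠ 0) {p : ℝ} (hp0 : 0 ≤ p) (hp1 : p < 1) :
    (log 2 - eulerMascheroniConstant) / 2 - 1 / n ≤ log 2 / 2 + log n / 2 +
      ∑ m ∈ range (n + 1), ((1 - p + m)⁻¹ - 3 / 2 * (1 - p / 2 + m)⁻¹) := by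
  have hterm (m : ℕ) :
      -((1 + (m : ℝ))⁻¹ / 2) ≤ (1 - p + m)⁻¹ - 3 / 2 * (1 - p / 2 + m)⁻¹ := by
    have := neg_half_inv_le (a := 1 + m) hp0 (by linarith [m.cast_nonneg (α := ℝ)])
    rwa [show 1 + (m : ℝ) - p = 1 - p + m by ring,
      show 1 + (m : ℝ) - p / 2 = 1 - p / 2 + m by ring] at this
  have hharm : (harmonic (n + 1) : ℝ) = ∑ m ∈ range (n + 1), (1 + (m : ℝ))⁻¹ := by
    simp [harmonic, add_comm]
  have hsum := sum_le_sum fun m (_ : m ∈ range (n + 1)) ↦ hterm m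
  rw [sum_neg_distrib, ← sum_div, ← hharm] at hsum
  have := harmonic_succ_sub_log_le hn
  have : (2 : ℝ) / n = 2 * (1 / n) := by ring
  linarith

lemma mul_sub_le_logDSeq_sub {n : ℕ} (hn : n ≠ 0) {p q : ℝ} (hp : 0 ≤ p) (hpq : p ≤ q)
    (hq : q < 1) :
    ((log 2 - eulerMascheroniConstant) / 2 - 1 / n) * (q - p) ≤ logDSeq n q - logDSeq n p := by
  have hderiv (x : ℝ) (hx : x ∈ Set.Ico (0 : ℝ) 1) := hasDerivAt_logDSeq n hx.2
  refine (convex_Ico 0 1).mul_sub_le_image_sub_of_le_deriv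
    (fun x hx ↦ (hderiv x hx).continuousAt.continuousWithinAt)
    (fun x hx ↦ ?_) (fun x hx ↦ ?_) p ⟨hp, hpq.trans_lt hq⟩ q ⟨hp.trans hpq, hq⟩ hpq
  all_goals rw [interior_Ico] at hx
  · exact (hderiv x (Set.Ioo_subset_Ico_self hx)).differentiableAt.differentiableWithinAt
  · rw [(hderiv x (Set.Ioo_subset_Ico_self hx)).deriv]
    exact le_deriv_logDSeq hn hx.1.le hx.2

lemma mul_sub_le_log_D_sub {p q : ℝ} (hp : 0 ≤ p) (hpq : p ≤ q) (hq : q < 1) :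
    (log 2 - eulerMascheroniConstant) / 2 * (q - p) ≤ log (D q) - log (D p) := by
  have hlim : Tendsto (fun n : ℕ ↦ ((log 2 - eulerMascheroniConstant) / 2 - 1 / n) * (q - p))
      atTop (𝓝 ((log 2 - eulerMascheroniConstant) / 2 * (q - p))) := by
    simpa using (tendsto_one_div_atTop_nhds_zero_nat.const_sub _).mul_const (q - p)
  refine le_of_tendsto_of_tendsto hlim
    ((tendsto_logDSeq hq).sub (tendsto_logDSeq (hpq.trans_lt hq))) ?_
  filter_upwards [eventually_ne_atTop 0] with n hn
  exact mul_sub_le_logDSeq_sub hn hp hpq hq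

lemma strictMonoOn_D : StrictMonoOn D (Set.Ico 0 1) := by
  intro p hp q hq hpq
  have hpos : 0 < (log 2 - eulerMascheroniConstant) / 2 * (q - p) :=
    mul_pos (by linarith [eulerMascheroniConstant_lt_log_two]) (sub_pos.2 hpq)
  have := mul_sub_le_log_D_sub hp.1 hpq.le hq.2
  rw [← log_lt_log_iff (D_pos hp.2) (D_pos hq.2)]
  linarith

lemma D_zero : D 0 = 1 := by
  simp [D]

theorem stmt4 :
    StrictMonoOn D (Set.Ioo (0:ℝ) 1) ∧ ∀ p ∈ Set.Ioo (0:ℝ) 1, 1 < D p := by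
  refine ⟨strictMonoOn_D.mono Set.Ioo_subset_Ico_self, fun p hp ↦ ?_⟩
  simpa [D_zero] using strictMonoOn_D ⟨le_rfl, one_pos⟩ ⟨hp.1.le, hp.2⟩ hp.1
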